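/- arXiv:2310.14012 — 4 statements merged into one kernel-verified Lean document; each statement's English description precedes it below -/
import Mathlib

section
/- Let G be a 4×4 complex Hermitian positive semidefinite matrix indexed by (Fin 2) × (Fin 2) with trace 1 and rank at most 1. Then there exists a 4×4 unitary matrix U such that U G Uᴴ = E ⊗ E, where E is the 2×2 matrix with a single 1 in the (0,0) entry and zeros elsewhere. In particular, every fully coherent (rank-1) field can be rendered separable by a global unitary, with both degrees of freedom fully coherent. -/
open Matrix Kronecker ComplexOrder

/-!
A Hermitian matrix of rank at most one has at most one nonzero eigenvalue, and trace one forces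
it to equal 1. Conjugating by the eigenvector unitary therefore yields a matrix unit
`single i i 1`, and conjugating further by the permutation matrix of a transposition moves it to
`single (0, 0) (0, 0) 1 = E ⊗ E`.
-/

theorem Function.eq_pi_single_sum_of_support_subsingleton {n M : Type*} [Fintype n]
    [DecidableEq n] [AddCommMonoid M] {f : n → M} (hf : (Function.support f).Subsingleton)
    (hsum : ∑ i, f i ≠ 0) : ∃ i, f = Pi.single i (∑ j, f j) := by
  obtain ⟨i, -, hi⟩ := Finset.exists_ne_zero_of_sum_ne_zero hsum
  have hzero : ∀ j ≠ i, f j = 0 := fun j hji ↦ by_contra fun hj ↦ hji (hf hj hi)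
  refine ⟨i, ?_⟩
  rw [Finset.sum_eq_single i (fun j _ ↦ hzero j) (by simp)]
  ext j
  obtain rfl | hji := eq_or_ne j i <;> simp [*]

namespace Matrix

variable {n 𝕜 : Type*} [Fintype n] [DecidableEq n] [RCLike 𝕜]

theorem permMatrix_mem_unitaryGroup (σ : Equiv.Perm n) :
    σ.permMatrix 𝕜 ∈ unitaryGroup n 𝕜 := by
  rw [mem_unitaryGroup_iff, star_eq_conjTranspose, conjTranspose_permMatrix, ← permMatrix_mul,
    inv_mul_cancel, permMatrix_one]

theorem permMatrix_mul_mul_conjTranspose_permMatrix (σ : Equiv.Perm n) (M : Matrix n n 𝕜) :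
    σ.permMatrix 𝕜 * M * (σ.permMatrix 𝕜)ᴴ = M.submatrix σ σ := by
  rw [conjTranspose_permMatrix, PEquiv.toMatrix_toPEquiv_mul, PEquiv.mul_toMatrix_toPEquiv,
    submatrix_submatrix]
  rfl

theorem IsHermitian.support_eigenvalues_subsingleton_of_rank_le_one {A : Matrix n n 𝕜}
    (hA : A.IsHermitian) (hrank : A.rank ≤ 1) :
    (Function.support hA.eigenvalues).Subsingleton := fun i hi j hj ↦ by
  rw [hA.rank_eq_card_non_zero_eigs, Fintype.card_le_one_iff] at hrank
  exact congrArg Subtype.val (hrank ⟨i, hi⟩ ⟨j, hj⟩)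

theorem IsHermitian.exists_eigenvalues_eq_pi_single_of_rank_le_one_of_trace_eq_one
    {A : Matrix n n 𝕜} (hA : A.IsHermitian) (hrank : A.rank ≤ 1) (htr : A.trace = 1) :
    ∃ i, hA.eigenvalues = Pi.single i 1 := by
  have hsum : ∑ i, hA.eigenvalues i = 1 := by
    exact_mod_cast hA.trace_eq_sum_eigenvalues.symm.trans htr
  simpa only [hsum] using Function.eq_pi_single_sum_of_support_subsingleton
    (hA.support_eigenvalues_subsingleton_of_rank_le_one hrank) (hsum ▸ one_ne_zero)

theorem IsHermitian.exists_unitary_conj_eq_single_of_rank_le_one_of_trace_eq_one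
    {A : Matrix n n 𝕜} (hA : A.IsHermitian) (hrank : A.rank ≤ 1) (htr : A.trace = 1) (k : n) :
    ∃ U ∈ unitaryGroup n 𝕜, U * A * Uᴴ = single k k 1 := by
  obtain ⟨i, hi⟩ := hA.exists_eigenvalues_eq_pi_single_of_rank_le_one_of_trace_eq_one hrank htr
  set V := (hA.eigenvectorUnitary : Matrix n n 𝕜)
  have hdiag : Vᴴ * A * V = single i i 1 := by
    have := hA.conjStarAlgAut_star_eigenvectorUnitary
    rw [Unitary.conjStarAlgAut_star_apply, hi] at this
    rw [← star_eq_conjTranspose, this, ← diagonal_single]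
    congr 1
    ext j
    simp [Pi.single_apply, apply_ite]
  set P := (Equiv.swap i k).permMatrix 𝕜
  refine ⟨P * Vᴴ, Submonoid.mul_mem _ (permMatrix_mem_unitaryGroup _)
    (Unitary.star_mem hA.eigenvectorUnitary.2), ?_⟩
  calc P * Vᴴ * A * (P * Vᴴ)ᴴ = P * (Vᴴ * A * V) * Pᴴ := by
        simp only [conjTranspose_mul, conjTranspose_conjTranspose, Matrix.mul_assoc]
    _ = single k k 1 := by
        rw [hdiag, permMatrix_mul_mul_conjTranspose_permMatrix, submatrix_single_equiv]
        simp

end Matrix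

/-- Every rank-≤1, trace-1, Hermitian positive semidefinite 4×4 coherence matrix (a fully
coherent field) can be brought by a global unitary to the separable form `E ⊗ E`, where `E`
is the 2×2 matrix with a single 1 in the (0,0) entry; both degrees of freedom are then fully
coherent. -/
theorem rank_one_unitarily_separable
    (G : Matrix (Fin 2 × Fin 2) (Fin 2 × Fin 2) ℂ) (hG : G.PosSemidef)
    (htr : G.trace = 1) (hrank : G.rank ≤ 1) :
    ∃ U : Matrix (Fin 2 × Fin 2) (Fin 2 × Fin 2) ℂ, U * Uᴴ = 1 ∧
      U * G * Uᴴ =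
        Matrix.single (0 : Fin 2) (0 : Fin 2) (1 : ℂ) ⊗ₖ
          Matrix.single (0 : Fin 2) (0 : Fin 2) (1 : ℂ) := by
  obtain ⟨U, hU, hconj⟩ :=
    hG.isHermitian.exists_unitary_conj_eq_single_of_rank_le_one_of_trace_eq_one hrank htr (0, 0)
  refine ⟨U, mem_unitaryGroup_iff.mp hU, ?_⟩
  rw [hconj, single_kronecker_single, mul_one]
end

section
/- Let G be a 4×4 complex Hermitian positive semidefinite matrix indexed by (Fin 2) × (Fin 2) with rank at least 3. Then both the reduced spatial coherence matrix G_s (entries (G_s) k l = ∑_i G (k,i) (l,i)) and the reduced polarization coherence matrix G_p (entries (G_p) i j = ∑_k G (k,i) (k,j)) are positive definite (both of their eigenvalues are strictly positive). Consequently, if additionally trace G = 1, both degrees of freedom carry strictly positive entropy: neither degree of freedom of a rank-3 (or rank-4) field can be free of statistical fluctuations. -/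
/-!
For `x ≠ 0`, the quadratic form of the partial trace `∑ᵢ G (·, i) (·, i)` at `x` is the sum
of the quadratic forms of `G` at the vectors `x ⊗ eᵢ`. If it vanished, positivity of `G` would
put all these linearly independent vectors in the kernel of `G`, so that
`rank G + card n ≤ card (m × n)`; for `m = n = Fin 2` this means `rank G ≤ 2`. The polarization
reduction is the spatial one of `G` with the two factors swapped. A positive definite matrix of
unit trace and size at least two has all its eigenvalues in `(0, 1)`, so each term `-μ log₂ μ`
of its entropy is positive.
-/

open Matrix ComplexOrder

/-- The von Neumann entropy (base 2) of a Hermitian matrix: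
`S = -∑ μ_j log₂ μ_j` over its eigenvalues, with `0 · log₂ 0 = 0`
(automatic since `Real.logb 2 0 = 0`). -/
noncomputable def entropy {n : Type*} [Fintype n] [DecidableEq n] {M : Matrix n n ℂ}
    (hM : M.IsHermitian) : ℝ :=
  -∑ i, hM.eigenvalues i * Real.logb 2 (hM.eigenvalues i)

/-- The reduced spatial coherence matrix: trace out the polarization index. -/
noncomputable def redS (G : Matrix (Fin 2 × Fin 2) (Fin 2 × Fin 2) ℂ) :
    Matrix (Fin 2) (Fin 2) ℂ :=
  Matrix.of fun k l => ∑ i, G (k, i) (l, i)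

/-- The reduced polarization coherence matrix: trace out the spatial index. -/
noncomputable def redP (G : Matrix (Fin 2 × Fin 2) (Fin 2 × Fin 2) ℂ) :
    Matrix (Fin 2) (Fin 2) ℂ :=
  Matrix.of fun i j => ∑ k, G (k, i) (k, j)

namespace Matrix

variable {m n ι K 𝕜 : Type*}

theorem rank_add_card_le_of_mulVec_eq_zero [Fintype n] [Fintype ι] [Field K] {A : Matrix m n K}
    {v : ι → n → K} (hv : LinearIndependent K v) (hA : ∀ i, A *ᵥ v i = 0) :
    A.rank + Fintype.card ι ≤ Fintype.card n := by
  have hspan : Submodule.span K (Set.range v) ≤ LinearMap.ker A.mulVecLin :=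
    Submodule.span_le.mpr <| Set.range_subset_iff.mpr hA
  have hker := finrank_span_eq_card hv ▸ Submodule.finrank_mono hspan
  have := LinearMap.finrank_range_add_finrank_ker A.mulVecLin
  rw [Module.finrank_fintype_fun_eq_card] at this
  exact this ▸ Nat.add_le_add_left hker _

section PartialTrace

variable [Fintype n]

def partialTraceRight [AddCommMonoid K] (G : Matrix (m × n) (m × n) K) : Matrix m m K :=
  of fun k l => ∑ i, G (k, i) (l, i)

theorem trace_partialTraceRight [Fintype m] [AddCommMonoid K] (G : Matrix (m × n) (m × n) K) :
    G.partialTraceRight.trace = G.trace := by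
  simp [trace, partialTraceRight, Fintype.sum_prod_type]

theorem IsHermitian.partialTraceRight [AddCommMonoid K] [StarAddMonoid K]
    {G : Matrix (m × n) (m × n) K} (hG : G.IsHermitian) : G.partialTraceRight.IsHermitian := by
  ext k l
  simp only [conjTranspose_apply, Matrix.partialTraceRight, of_apply, star_sum]
  exact Finset.sum_congr rfl fun i _ => hG.apply (k, i) (l, i)

variable [DecidableEq n]

def tensorSingle [Zero K] (x : m → K) (i : n) : m × n → K :=
  fun p => if p.2 = i then x p.1 else 0

theorem linearIndependent_tensorSingle [Field K] {x : m → K} (hx : x ≠ 0) :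
    LinearIndependent K (tensorSingle x : n → m × n → K) := by
  obtain ⟨k, hk⟩ := Function.ne_iff.mp hx
  refine Fintype.linearIndependent_iff.mpr fun c hc j => ?_
  have := congrFun hc (k, j)
  simp only [Finset.sum_apply, Pi.smul_apply, tensorSingle, smul_eq_mul, mul_ite, mul_zero,
    Finset.sum_ite_eq, Finset.mem_univ, if_true, Pi.zero_apply] at this
  exact (mul_eq_zero.mp this).resolve_right hk

theorem dotProduct_partialTraceRight_mulVec [Fintype m] [CommSemiring K] [StarRing K]
    (G : Matrix (m × n) (m × n) K) (x : m → K) :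
    star x ⬝ᵥ G.partialTraceRight *ᵥ x =
      ∑ i, star (tensorSingle x i) ⬝ᵥ G *ᵥ tensorSingle x i := by
  simp only [dotProduct, mulVec, partialTraceRight, tensorSingle, of_apply, Pi.star_apply,
    Fintype.sum_prod_type, apply_ite star, star_zero, ite_mul, zero_mul, mul_ite, mul_zero,
    Finset.sum_ite_irrel, Finset.sum_const_zero, Finset.sum_ite_eq', Finset.mem_univ, if_true,
    Finset.mul_sum, Finset.sum_mul]
  exact (Finset.sum_congr rfl fun _ _ => Finset.sum_comm).trans Finset.sum_comm

theorem PosSemidef.posDef_partialTraceRight [Fintype m] [RCLike 𝕜]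
    {G : Matrix (m × n) (m × n) 𝕜} (hG : G.PosSemidef)
    (hrank : Fintype.card (m × n) < G.rank + Fintype.card n) :
    G.partialTraceRight.PosDef := by
  refine .of_dotProduct_mulVec_pos hG.isHermitian.partialTraceRight fun x hx => ?_
  rw [dotProduct_partialTraceRight_mulVec]
  have hterm i : 0 ≤ star (tensorSingle x i) ⬝ᵥ G *ᵥ tensorSingle x i :=
    hG.dotProduct_mulVec_nonneg _
  refine (Finset.sum_nonneg fun i _ => hterm i).lt_of_ne fun hzero => hrank.not_ge ?_
  have hker i : G *ᵥ tensorSingle x i = 0 :=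
    (hG.dotProduct_mulVec_zero_iff _).mp <|
      (Finset.sum_eq_zero_iff_of_nonneg fun i _ => hterm i).mp hzero.symm i (Finset.mem_univ i)
  exact rank_add_card_le_of_mulVec_eq_zero (linearIndependent_tensorSingle hx) hker

end PartialTrace

theorem trace_submatrix_equiv [Fintype m] [Fintype n] [AddCommMonoid K] (A : Matrix n n K)
    (e : m ≃ n) : (A.submatrix e e).trace = A.trace :=
  e.sum_comp A.diag

theorem PosDef.eigenvalues_lt_one_of_trace_eq_one [Fintype n] [DecidableEq n] [Nontrivial n]
    [RCLike 𝕜] {M : Matrix n n 𝕜} (hM : M.PosDef) (htr : M.trace = 1) (i : n) :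
    hM.isHermitian.eigenvalues i < 1 := by
  obtain ⟨j, hji⟩ := exists_ne i
  have hsum : ∑ k, hM.isHermitian.eigenvalues k = 1 := by
    have := hM.isHermitian.trace_eq_sum_eigenvalues
    rwa [htr, ← RCLike.ofReal_sum, eq_comm, ← RCLike.ofReal_one, RCLike.ofReal_inj] at this
  exact hsum ▸ Finset.single_lt_sum hji (Finset.mem_univ i) (Finset.mem_univ j)
    (hM.eigenvalues_pos j) fun k _ _ => (hM.eigenvalues_pos k).le

end Matrix

theorem entropy_pos_of_posDef_of_trace_eq_one {n : Type*} [Fintype n] [DecidableEq n]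
    [Nontrivial n] {M : Matrix n n ℂ} (hM : M.PosDef) (htr : M.trace = 1) (h : M.IsHermitian) :
    0 < entropy h := by
  refine neg_pos.mpr <| Finset.sum_neg (fun i _ => ?_) Finset.univ_nonempty
  exact mul_neg_of_pos_of_neg (hM.eigenvalues_pos i)
    (Real.logb_neg one_lt_two (hM.eigenvalues_pos i)
      (hM.eigenvalues_lt_one_of_trace_eq_one htr i))

/-- If a Hermitian positive semidefinite 4×4 coherence matrix has rank at least 3, then both
reduced coherence matrices are positive definite; consequently, if moreover `trace G = 1`,
both degrees of freedom carry strictly positive entropy. -/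
theorem reduced_posDef_of_rank_ge_three
    (G : Matrix (Fin 2 × Fin 2) (Fin 2 × Fin 2) ℂ) (hG : G.PosSemidef)
    (hrank : 3 ≤ G.rank) :
    (redS G).PosDef ∧ (redP G).PosDef ∧
      (G.trace = 1 →
        ∀ (hs : (redS G).IsHermitian) (hp : (redP G).IsHermitian),
          0 < entropy hs ∧ 0 < entropy hp) := by
  let e := Equiv.prodComm (Fin 2) (Fin 2)
  have hredS : redS G = G.partialTraceRight := rfl
  have hredP : redP G = (G.submatrix e e).partialTraceRight := rfl
  have hS : (redS G).PosDef := hG.posDef_partialTraceRight (by simp; omega)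
  have hP : (redP G).PosDef := (hG.submatrix e).posDef_partialTraceRight (by simp; omega)
  refine ⟨hS, hP, fun htr hs hp => ⟨?_, ?_⟩⟩
  · refine entropy_pos_of_posDef_of_trace_eq_one hS ?_ hs
    rw [hredS, trace_partialTraceRight, htr]
  · refine entropy_pos_of_posDef_of_trace_eq_one hP ?_ hp
    rw [hredP, trace_partialTraceRight, trace_submatrix_equiv, htr]
end

section
/- Let G be a 4×4 complex Hermitian positive semidefinite matrix indexed by (Fin 2) × (Fin 2) with trace 1, and let λ₁ ≥ λ₂ ≥ λ₃ ≥ λ₄ ≥ 0 be its eigenvalues in decreasing order. Define f(x) = −x log₂ x − (1−x) log₂ (1−x) with 0 · log₂ 0 = 0. Then there exists a 4×4 unitary matrix U such that the reduced polarization coherence matrix of U G Uᴴ (entries ∑_k (U G Uᴴ) (k,i) (k,j)) has entropy exactly f(λ₁ + λ₂), and the reduced spatial coherence matrix of U G Uᴴ (entries ∑_i (U G Uᴴ) (k,i) (l,i)) has entropy exactly f(λ₁ + λ₃). That is, the minimum locked entropy f(λ₁ + λ₂) in one degree of freedom is achievable, with entropy f(λ₁ + λ₃) concentrated in the other. -/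
open Matrix ComplexOrder

/-- The binary entropy function `f(x) = -x log₂ x - (1-x) log₂ (1-x)`, with `0 · log₂ 0 = 0`
(automatic since `Real.logb 2 0 = 0`). -/
noncomputable def fEnt (x : ℝ) : ℝ :=
  -(x * Real.logb 2 x) - (1 - x) * Real.logb 2 (1 - x)

/-!
Diagonalize `G` by a unitary and permute the eigenbasis so that the eigenvalues sit on the product
basis as the grid `(k, i) ↦ [[λ₁, λ₃], [λ₂, λ₄]] k i`, rows indexed by the spatial point `k`,
columns by the polarization `i`. Both partial traces of a diagonal matrix are diagonal: the
polarization one carries the column sums `λ₁ + λ₂, λ₃ + λ₄`, the spatial one the row sums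
`λ₁ + λ₃, λ₂ + λ₄`. The entropy of a trace-one diagonal `2 × 2` matrix is `f` of its first entry.
-/

open Finset

theorem Equiv.Perm.exists_comp_eq_of_map_univ_eq {α β : Type*} [Fintype α] [DecidableEq β]
    {f g : α → β} (h : univ.val.map f = univ.val.map g) : ∃ σ : Equiv.Perm α, g ∘ σ = f := by
  have hcard (c : β) : Fintype.card {a // f a = c} = Fintype.card {a // g a = c} := by
    simpa [Fintype.card_subtype, Multiset.count_map, eq_comm, Finset.card_def] using
      congrArg (Multiset.count c) h
  exact ⟨.ofFiberEquiv fun c ↦ Fintype.equivOfCardEq (hcard c),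
    funext (Equiv.ofFiberEquiv_map _)⟩

theorem Matrix.permMatrix_mul_star {n R : Type*} [Fintype n] [DecidableEq n]
    [NonAssocSemiring R] [StarRing R] (σ : Equiv.Perm n) :
    σ.permMatrix R * star (σ.permMatrix R) = 1 := by
  rw [star_eq_conjTranspose, conjTranspose_permMatrix, ← permMatrix_mul, inv_mul_cancel,
    permMatrix_one]

theorem Matrix.permMatrix_mul_mul_star {n R : Type*} [Fintype n] [DecidableEq n]
    [NonAssocSemiring R] [StarRing R] (σ : Equiv.Perm n) (M : Matrix n n R) :
    σ.permMatrix R * M * star (σ.permMatrix R) = M.submatrix σ σ := by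
  rw [star_eq_conjTranspose, conjTranspose_permMatrix, PEquiv.toMatrix_toPEquiv_mul,
    PEquiv.mul_toMatrix_toPEquiv, submatrix_submatrix]
  rfl

theorem Matrix.IsHermitian.exists_unitary_conj_eq_diagonal {𝕜 n : Type*} [RCLike 𝕜] [Fintype n]
    [DecidableEq n] {A : Matrix n n 𝕜} (hA : A.IsHermitian) {d : n → ℝ}
    (hd : univ.val.map hA.eigenvalues = univ.val.map d) :
    ∃ U : Matrix n n 𝕜, U * Uᴴ = 1 ∧ U * A * Uᴴ = diagonal (RCLike.ofReal ∘ d) := by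
  obtain ⟨σ, hσ⟩ := Equiv.Perm.exists_comp_eq_of_map_univ_eq hd.symm
  set V : Matrix n n 𝕜 := ↑hA.eigenvectorUnitary
  set P : Matrix n n 𝕜 := σ.permMatrix 𝕜
  have hV : star V * A * V = diagonal (RCLike.ofReal ∘ hA.eigenvalues) := by
    simpa using hA.conjStarAlgAut_star_eigenvectorUnitary
  refine ⟨P * star V, ?_, ?_⟩
  · rw [← star_eq_conjTranspose, star_mul, star_star, mul_assoc, ← mul_assoc (star V),
      Unitary.coe_star_mul_self, one_mul, permMatrix_mul_star]
  · calc P * star V * A * (P * star V)ᴴ = P * (star V * A * V) * star P := by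
          simp only [← star_eq_conjTranspose, star_mul, star_star, mul_assoc]
      _ = diagonal (RCLike.ofReal ∘ d) := by
          rw [hV, permMatrix_mul_mul_star, submatrix_diagonal_equiv, ← hσ]
          rfl

theorem Matrix.IsHermitian.eigenvalues_map_univ_diagonal {𝕜 n : Type*} [RCLike 𝕜] [Fintype n]
    [DecidableEq n] {d : n → ℝ} (h : (diagonal (RCLike.ofReal ∘ d : n → 𝕜)).IsHermitian) :
    univ.val.map h.eigenvalues = univ.val.map d := by
  apply Multiset.map_injective (RCLike.ofReal_injective (K := 𝕜))
  rw [Multiset.map_map, ← h.roots_charpoly_eq_eigenvalues, charpoly_diagonal,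
    Polynomial.roots_prod _ _ (by simp [Finset.prod_ne_zero_iff, Polynomial.X_sub_C_ne_zero])]
  simp [Multiset.map_map]

theorem entropy_eq_of_map_univ_eq {n : Type*} [Fintype n] [DecidableEq n] {M : Matrix n n ℂ}
    (hM : M.IsHermitian) {d : n → ℝ} (hd : univ.val.map hM.eigenvalues = univ.val.map d) :
    entropy hM = -∑ i, d i * Real.logb 2 (d i) := by
  have sum_eq (f : n → ℝ) :
      ∑ i, f i * Real.logb 2 (f i) = ((univ.val.map f).map fun μ ↦ μ * Real.logb 2 μ).sum := by
    rw [Multiset.map_map]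
    rfl
  rw [entropy, sum_eq, hd, ← sum_eq]

theorem entropy_diagonal {n : Type*} [Fintype n] [DecidableEq n] {d : n → ℝ}
    (h : (diagonal (RCLike.ofReal ∘ d : n → ℂ)).IsHermitian) :
    entropy h = -∑ i, d i * Real.logb 2 (d i) :=
  entropy_eq_of_map_univ_eq h h.eigenvalues_map_univ_diagonal

theorem entropy_diagonal_fin_two {p : Fin 2 → ℝ} (hp : p 0 + p 1 = 1)
    (h : (diagonal (RCLike.ofReal ∘ p : Fin 2 → ℂ)).IsHermitian) :
    entropy h = fEnt (p 0) := by
  rw [entropy_diagonal, Fin.sum_univ_two, fEnt, show 1 - p 0 = p 1 by linarith]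
  ring

theorem redP_diagonal (d : Fin 2 × Fin 2 → ℝ) :
    redP (diagonal (RCLike.ofReal ∘ d)) = diagonal (RCLike.ofReal ∘ fun i ↦ ∑ k, d (k, i)) := by
  ext i j
  by_cases h : i = j <;> simp [redP, diagonal_apply, h]

theorem redS_diagonal (d : Fin 2 × Fin 2 → ℝ) :
    redS (diagonal (RCLike.ofReal ∘ d)) = diagonal (RCLike.ofReal ∘ fun k ↦ ∑ i, d (k, i)) := by
  ext k l
  by_cases h : k = l <;> simp [redS, diagonal_apply, h]

theorem locked_entropy_achievable_general
    (G : Matrix (Fin 2 × Fin 2) (Fin 2 × Fin 2) ℂ) (hG : G.PosSemidef)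
    (htr : G.trace = 1)
    (l1 l2 l3 l4 : ℝ)
    (heig : Finset.univ.val.map hG.isHermitian.eigenvalues =
      ({l1, l2, l3, l4} : Multiset ℝ)) :
    ∃ U : Matrix (Fin 2 × Fin 2) (Fin 2 × Fin 2) ℂ, U * Uᴴ = 1 ∧
      (∀ hp : (redP (U * G * Uᴴ)).IsHermitian, entropy hp = fEnt (l1 + l2)) ∧
      (∀ hs : (redS (U * G * Uᴴ)).IsHermitian, entropy hs = fEnt (l1 + l3)) := by
  have hsum : l1 + l2 + l3 + l4 = 1 := by
    have h := congrArg Complex.re (hG.isHermitian.trace_eq_sum_eigenvalues.symm.trans htr)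
    simp only [Complex.re_sum, Complex.one_re] at h
    simpa [sum_eq_multiset_sum, heig, add_assoc] using h
  obtain ⟨U, hU, hUGU⟩ := hG.isHermitian.exists_unitary_conj_eq_diagonal
    (d := fun p ↦ ![![l1, l3], ![l2, l4]] p.1 p.2) <| by
      rw [heig]
      change l1 ::ₘ l2 ::ₘ l3 ::ₘ {l4} = l1 ::ₘ l3 ::ₘ l2 ::ₘ {l4}
      rw [Multiset.cons_swap l2]
  refine ⟨U, hU, ?_, ?_⟩
  · rw [hUGU, redP_diagonal]
    intro hp
    rw [entropy_diagonal_fin_two (by simp [Fin.sum_univ_two]; linarith) hp]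
    simp [Fin.sum_univ_two]
  · rw [hUGU, redS_diagonal]
    intro hs
    rw [entropy_diagonal_fin_two (by simp [Fin.sum_univ_two]; linarith) hs]
    simp [Fin.sum_univ_two]

/-- For a trace-1 Hermitian positive semidefinite 4×4 coherence matrix with eigenvalues
`l1 ≥ l2 ≥ l3 ≥ l4 ≥ 0`, there is a global unitary `U` for which the reduced polarization
coherence matrix of `U G Uᴴ` has entropy exactly `f(l1 + l2)` (the minimum locked entropy)
while the reduced spatial coherence matrix has entropy exactly `f(l1 + l3)`. -/
theorem locked_entropy_achievable
    (G : Matrix (Fin 2 × Fin 2) (Fin 2 × Fin 2) ℂ) (hG : G.PosSemidef)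
    (htr : G.trace = 1)
    (l1 l2 l3 l4 : ℝ) (h21 : l2 ≤ l1) (h32 : l3 ≤ l2) (h43 : l4 ≤ l3) (h4 : 0 ≤ l4)
    (heig : Finset.univ.val.map hG.isHermitian.eigenvalues =
      ({l1, l2, l3, l4} : Multiset ℝ)) :
    ∃ U : Matrix (Fin 2 × Fin 2) (Fin 2 × Fin 2) ℂ, U * Uᴴ = 1 ∧
      (∀ hp : (redP (U * G * Uᴴ)).IsHermitian, entropy hp = fEnt (l1 + l2)) ∧
      (∀ hs : (redS (U * G * Uᴴ)).IsHermitian, entropy hs = fEnt (l1 + l3)) :=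
  locked_entropy_achievable_general G hG htr l1 l2 l3 l4 heig
end

section
/- Let G be a 4×4 complex Hermitian positive semidefinite matrix indexed by (Fin 2) × (Fin 2) with trace 1 and rank exactly 3, and let λ₁ ≥ λ₂ ≥ λ₃ > 0 be its nonzero eigenvalues. Define f(x) = −x log₂ x − (1−x) log₂ (1−x) with 0 · log₂ 0 = 0. Then for every 4×4 unitary matrix U, the entropy of the reduced spatial coherence matrix of U G Uᴴ (entries ∑_i (U G Uᴴ) (k,i) (l,i)) and the entropy of the reduced polarization coherence matrix of U G Uᴴ (entries ∑_k (U G Uᴴ) (k,i) (k,j)) are both strictly positive; in particular these entropies are bounded below by f(λ₁ + λ₂) > 0. Hence the entropy of a rank-3 field — no matter how low — can never be fully concentrated into one degree of freedom: some entropy is always locked in each degree of freedom. -/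
open Matrix ComplexOrder

/-!
Both reduced matrices of `M = U G Uᴴ` are compressions `∑ₖ Kₖᴴ G Kₖ` of `G` by two isometries
`Kₖ` with orthogonal ranges. Hence every Rayleigh quotient of a reduced matrix is a sum of two
Rayleigh quotients of `G` along orthonormal vectors, which by Ky Fan's principle is at most
`λ₁ + λ₂ = 1 - λ₃`. The two eigenvalues `μ, 1 - μ` of a reduced matrix therefore lie in
`[λ₃, 1 - λ₃]`, and concavity of the binary entropy gives `f(μ) ≥ f(λ₃) = f(λ₁ + λ₂) > 0`.
-/

open scoped InnerProductSpace

lemma Fintype.sum_comp_eq_multiset_sum {ι α M : Type*} [Fintype ι] [AddCommMonoid M]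
    {f : ι → α} {s : Multiset α} (hf : Finset.univ.val.map f = s) (g : α → M) :
    ∑ i, g (f i) = (s.map g).sum := by
  rw [← hf, Multiset.map_map]
  rfl

lemma fEnt_eq_binEntropy_div_log (x : ℝ) : fEnt x = Real.binEntropy x / Real.log 2 := by
  simp only [fEnt, Real.binEntropy, Real.log_inv, Real.logb]
  ring

lemma fEnt_pos {x : ℝ} (h0 : 0 < x) (h1 : x < 1) : 0 < fEnt x := by
  rw [fEnt_eq_binEntropy_div_log]
  exact div_pos (Real.binEntropy_pos h0 h1) (Real.log_pos one_lt_two)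

lemma fEnt_one_sub_le {s t : ℝ} (hs : 0 ≤ s) (ht : t ∈ Set.Icc s (1 - s)) :
    fEnt (1 - s) ≤ fEnt t := by
  have hs1 : s ≤ 1 := by linarith [ht.1, ht.2]
  have h := Real.strictConcave_binEntropy.concaveOn.min_le_of_mem_Icc
    ⟨hs, hs1⟩ ⟨by linarith, by linarith⟩ ht
  rw [Real.binEntropy_one_sub, min_self] at h
  rw [fEnt_eq_binEntropy_div_log, fEnt_eq_binEntropy_div_log, Real.binEntropy_one_sub]
  exact div_le_div_of_nonneg_right h (Real.log_nonneg one_le_two)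

lemma eigenvalues_zero_add_eigenvalues_one {R : Matrix (Fin 2) (Fin 2) ℂ} (hR : R.IsHermitian)
    (htr : R.trace = 1) : hR.eigenvalues 0 + hR.eigenvalues 1 = 1 := by
  have h := hR.trace_eq_sum_eigenvalues
  rw [htr, Fin.sum_univ_two] at h
  simpa using congrArg Complex.re h.symm

lemma entropy_eq_fEnt {R : Matrix (Fin 2) (Fin 2) ℂ} (hR : R.IsHermitian) (htr : R.trace = 1) :
    entropy hR = fEnt (hR.eigenvalues 0) := by
  have hsum := eigenvalues_zero_add_eigenvalues_one hR htr
  rw [entropy, Fin.sum_univ_two, fEnt, ← hsum, add_sub_cancel_left]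
  ring

lemma fEnt_one_sub_le_entropy {R : Matrix (Fin 2) (Fin 2) ℂ} (hR : R.IsHermitian)
    (htr : R.trace = 1) {s : ℝ} (hs : 0 ≤ s) (hle : ∀ i, hR.eigenvalues i ≤ 1 - s) :
    fEnt (1 - s) ≤ entropy hR := by
  have hsum := eigenvalues_zero_add_eigenvalues_one hR htr
  rw [entropy_eq_fEnt hR htr]
  exact fEnt_one_sub_le hs ⟨by linarith [hle 1], hle 0⟩

lemma Matrix.star_mulVec_dotProduct_mulVec {R m n : Type*} [CommSemiring R] [StarRing R]
    [Fintype m] [Fintype n] (K L : Matrix m n R) (v w : n → R) :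
    star (K *ᵥ v) ⬝ᵥ L *ᵥ w = star v ⬝ᵥ (Kᴴ * L) *ᵥ w := by
  rw [star_mulVec, ← dotProduct_mulVec, mulVec_mulVec]

namespace Matrix.IsHermitian

variable {𝕜 ι : Type*} [RCLike 𝕜] [Fintype ι] [DecidableEq ι] {A : Matrix ι ι 𝕜}
  (hA : A.IsHermitian)
include hA

lemma inner_eigenvectorBasis_toLp_mulVec (j : ι) (x : ι → 𝕜) :
    ⟪hA.eigenvectorBasis j, WithLp.toLp 2 (A *ᵥ x)⟫_𝕜 =
      hA.eigenvalues j * ⟪hA.eigenvectorBasis j, WithLp.toLp 2 x⟫_𝕜 := by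
  have h := congrArg star (hA.mulVec_eigenvectorBasis j)
  rw [star_mulVec, hA.eq, star_smul, star_trivial (hA.eigenvalues j),
    RCLike.real_smul_eq_coe_smul (K := 𝕜)] at h
  simp only [EuclideanSpace.inner_eq_star_dotProduct]
  rw [dotProduct_comm, dotProduct_mulVec, h, smul_dotProduct, dotProduct_comm, smul_eq_mul]

lemma re_star_dotProduct_mulVec (x : ι → 𝕜) :
    RCLike.re (star x ⬝ᵥ A *ᵥ x) =
      ∑ j, hA.eigenvalues j * ‖⟪hA.eigenvectorBasis j, WithLp.toLp 2 x⟫_𝕜‖ ^ 2 := by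
  have h := hA.eigenvectorBasis.sum_inner_mul_inner (WithLp.toLp 2 x) (WithLp.toLp 2 (A *ᵥ x))
  rw [EuclideanSpace.inner_toLp_toLp, dotProduct_comm] at h
  rw [← h, map_sum]
  refine Finset.sum_congr rfl fun j _ => ?_
  rw [hA.inner_eigenvectorBasis_toLp_mulVec, mul_left_comm, ← inner_conj_symm, RCLike.conj_mul]
  norm_cast

/-- Ky Fan's maximum principle: for `c` the `|κ|`-th largest eigenvalue, the bound is the sum
of the `|κ|` largest eigenvalues. -/
theorem sum_re_star_dotProduct_mulVec_le {κ : Type*} [Fintype κ] {x : κ → ι → 𝕜}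
    (hx : Orthonormal 𝕜 fun k => WithLp.toLp 2 (x k)) (c : ℝ) :
    ∑ k, RCLike.re (star (x k) ⬝ᵥ A *ᵥ x k) ≤
      Fintype.card κ * c + ∑ j, max (hA.eigenvalues j - c) 0 := by
  set b := hA.eigenvectorBasis
  set w : ι → ℝ := fun j => ∑ k, ‖⟪b j, WithLp.toLp 2 (x k)⟫_𝕜‖ ^ 2
  have hw_nonneg (j : ι) : 0 ≤ w j := by positivity
  have hw_le_one (j : ι) : w j ≤ 1 := by
    have bessel := hx.sum_inner_products_le (b j) (s := Finset.univ)
    simp_rw [norm_inner_symm _ (b j), b.orthonormal.1 j, one_pow] at bessel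
    exact bessel
  have hw_sum : ∑ j, w j = Fintype.card κ := by
    rw [Finset.sum_comm]
    simp [b.sum_sq_norm_inner_right, hx.1]
  calc ∑ k, RCLike.re (star (x k) ⬝ᵥ A *ᵥ x k) = ∑ j, hA.eigenvalues j * w j := by
        simp_rw [hA.re_star_dotProduct_mulVec, w, Finset.mul_sum]
        exact Finset.sum_comm
    _ ≤ ∑ j, (c * w j + max (hA.eigenvalues j - c) 0) := by
        gcongr with j
        rcases le_total (hA.eigenvalues j) c with h | h
        · nlinarith [hw_nonneg j, le_max_right (hA.eigenvalues j - c) 0]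
        · nlinarith [hw_le_one j, le_max_left (hA.eigenvalues j - c) 0]
    _ = Fintype.card κ * c + ∑ j, max (hA.eigenvalues j - c) 0 := by
        rw [Finset.sum_add_distrib, ← Finset.mul_sum, hw_sum, mul_comm]

theorem eigenvalues_le_of_eq_sum_conjTranspose_mul_mul {m κ : Type*} [Fintype m]
    [DecidableEq m] [Fintype κ] [DecidableEq κ] {R : Matrix m m 𝕜} (hR : R.IsHermitian)
    {K : κ → Matrix ι m 𝕜} (hK : ∀ k l, (K k)ᴴ * K l = if k = l then 1 else 0)
    (hRK : R = ∑ k, (K k)ᴴ * A * K k) (c : ℝ) (i : m) :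
    hR.eigenvalues i ≤ Fintype.card κ * c + ∑ j, max (hA.eigenvalues j - c) 0 := by
  set v := ⇑(hR.eigenvectorBasis i)
  have hv : star v ⬝ᵥ v = 1 := by
    rw [dotProduct_comm, ← EuclideanSpace.inner_eq_star_dotProduct, inner_self_eq_norm_sq_to_K,
      hR.eigenvectorBasis.orthonormal.1 i]
    simp
  have horth : Orthonormal 𝕜 fun k => WithLp.toLp 2 (K k *ᵥ v) := by
    refine orthonormal_iff_ite.2 fun k l => ?_
    rw [EuclideanSpace.inner_toLp_toLp, dotProduct_comm, star_mulVec_dotProduct_mulVec, hK]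
    split_ifs <;> simp [hv]
  have hquad : star v ⬝ᵥ R *ᵥ v = ∑ k, star (K k *ᵥ v) ⬝ᵥ A *ᵥ (K k *ᵥ v) := by
    simp_rw [mulVec_mulVec, star_mulVec_dotProduct_mulVec, ← Matrix.mul_assoc, hRK,
      sum_mulVec, dotProduct_sum]
  rw [hR.eigenvalues_eq i, hquad, map_sum]
  exact hA.sum_re_star_dotProduct_mulVec_le horth c

end Matrix.IsHermitian

namespace Matrix

variable {α β R : Type*} [DecidableEq α] [DecidableEq β]

def sliceSnd [Zero R] [One R] (b : β) : Matrix (α × β) α R :=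
  of fun p a => if p = (a, b) then 1 else 0

def sliceFst [Zero R] [One R] (a : α) : Matrix (α × β) β R :=
  of fun p b => if p = (a, b) then 1 else 0

variable [Fintype α] [Fintype β] [Semiring R] [StarRing R]

lemma conjTranspose_sliceSnd_mul_sliceSnd (b b' : β) :
    (sliceSnd b : Matrix (α × β) α R)ᴴ * (sliceSnd b' : Matrix (α × β) α R) =
      if b = b' then 1 else 0 := by
  ext a a'
  split_ifs with h <;> simp [sliceSnd, mul_apply, one_apply, h, eq_comm, apply_ite star]

lemma conjTranspose_sliceFst_mul_sliceFst (a a' : α) :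
    (sliceFst a : Matrix (α × β) β R)ᴴ * (sliceFst a' : Matrix (α × β) β R) =
      if a = a' then 1 else 0 := by
  ext b b'
  split_ifs with h <;> simp [sliceFst, mul_apply, one_apply, h, eq_comm, apply_ite star]

lemma conjTranspose_sliceSnd_mul_mul_sliceSnd (M : Matrix (α × β) (α × β) R) (b : β) :
    (sliceSnd b : Matrix (α × β) α R)ᴴ * M * (sliceSnd b : Matrix (α × β) α R) =
      M.submatrix (·, b) (·, b) := by
  ext a a'
  simp [mul_apply, sliceSnd, apply_ite star]

lemma conjTranspose_sliceFst_mul_mul_sliceFst (M : Matrix (α × β) (α × β) R) (a : α) :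
    (sliceFst a : Matrix (α × β) β R)ᴴ * M * (sliceFst a : Matrix (α × β) β R) =
      M.submatrix (a, ·) (a, ·) := by
  ext b b'
  simp [mul_apply, sliceFst, apply_ite star]

end Matrix

lemma redS_eq_sum (M : Matrix (Fin 2 × Fin 2) (Fin 2 × Fin 2) ℂ) :
    redS M = ∑ i, (sliceSnd i : Matrix (Fin 2 × Fin 2) (Fin 2) ℂ)ᴴ * M *
      (sliceSnd i : Matrix (Fin 2 × Fin 2) (Fin 2) ℂ) := by
  ext k l
  simp [conjTranspose_sliceSnd_mul_mul_sliceSnd, redS, Matrix.sum_apply]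

lemma redP_eq_sum (M : Matrix (Fin 2 × Fin 2) (Fin 2 × Fin 2) ℂ) :
    redP M = ∑ k, (sliceFst k : Matrix (Fin 2 × Fin 2) (Fin 2) ℂ)ᴴ * M *
      (sliceFst k : Matrix (Fin 2 × Fin 2) (Fin 2) ℂ) := by
  ext i j
  simp [conjTranspose_sliceFst_mul_mul_sliceFst, redP, Matrix.sum_apply]

lemma trace_redS (M : Matrix (Fin 2 × Fin 2) (Fin 2 × Fin 2) ℂ) : (redS M).trace = M.trace := by
  simp [redS, trace, Fintype.sum_prod_type]

lemma trace_redP (M : Matrix (Fin 2 × Fin 2) (Fin 2 × Fin 2) ℂ) : (redP M).trace = M.trace := by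
  simp only [redP, trace, diag_apply, of_apply, Fintype.sum_prod_type]
  exact Finset.sum_comm

theorem fEnt_le_entropy_of_eq_sum_conjTranspose_mul_mul {ι : Type*} [Fintype ι] [DecidableEq ι]
    {G : Matrix ι ι ℂ} (hG : G.IsHermitian) {l1 l2 l3 : ℝ} (h21 : l2 ≤ l1) (h32 : l3 ≤ l2)
    (h3 : 0 ≤ l3) (hsum : l1 + l2 + l3 = 1)
    (heig : Finset.univ.val.map hG.eigenvalues = ({l1, l2, l3, 0} : Multiset ℝ))
    {R : Matrix (Fin 2) (Fin 2) ℂ} (hR : R.IsHermitian) (htr : R.trace = 1)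
    {K : Fin 2 → Matrix ι (Fin 2) ℂ} (hK : ∀ k l, (K k)ᴴ * K l = if k = l then 1 else 0)
    (hRK : R = ∑ k, (K k)ᴴ * G * K k) :
    fEnt (l1 + l2) ≤ entropy hR := by
  have hexcess : ∑ j, max (hG.eigenvalues j - l2) 0 = l1 - l2 := by
    rw [Fintype.sum_comp_eq_multiset_sum heig fun t => max (t - l2) 0]
    simp [max_eq_left (sub_nonneg.2 h21), max_eq_right (sub_nonpos.2 h32), h3.trans h32]
  have hle (i : Fin 2) : hR.eigenvalues i ≤ 1 - l3 := by
    have h := hG.eigenvalues_le_of_eq_sum_conjTranspose_mul_mul hR hK hRK l2 i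
    rw [hexcess, Fintype.card_fin, Nat.cast_two] at h
    linarith
  rw [show l1 + l2 = 1 - l3 by linarith]
  exact fEnt_one_sub_le_entropy hR htr h3 hle

theorem rank_three_locked_entropy_general
    (G : Matrix (Fin 2 × Fin 2) (Fin 2 × Fin 2) ℂ) (hG : G.PosSemidef)
    (htr : G.trace = 1)
    (l1 l2 l3 : ℝ) (h21 : l2 ≤ l1) (h32 : l3 ≤ l2) (h3 : 0 < l3)
    (heig : Finset.univ.val.map hG.isHermitian.eigenvalues =
      ({l1, l2, l3, 0} : Multiset ℝ)) :
    0 < fEnt (l1 + l2) ∧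
      ∀ U : Matrix (Fin 2 × Fin 2) (Fin 2 × Fin 2) ℂ, U * Uᴴ = 1 →
        (∀ hs : (redS (U * G * Uᴴ)).IsHermitian,
          0 < entropy hs ∧ fEnt (l1 + l2) ≤ entropy hs) ∧
        (∀ hp : (redP (U * G * Uᴴ)).IsHermitian,
          0 < entropy hp ∧ fEnt (l1 + l2) ≤ entropy hp) := by
  have hsum : l1 + l2 + l3 = 1 := by
    have h := hG.isHermitian.trace_eq_sum_eigenvalues
    rw [htr, Fintype.sum_comp_eq_multiset_sum heig (RCLike.ofReal : ℝ → ℂ)] at h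
    linarith [show l1 + (l2 + l3) = 1 by simpa using congrArg Complex.re h.symm]
  have hpos : 0 < fEnt (l1 + l2) := fEnt_pos (by linarith) (by linarith)
  refine ⟨hpos, fun U hU => ?_⟩
  have htrace : (U * G * Uᴴ).trace = 1 := by
    rw [trace_mul_cycle, mul_eq_one_comm.mp hU, Matrix.one_mul, htr]
  have hiso (K L : Matrix (Fin 2 × Fin 2) (Fin 2) ℂ) : (Uᴴ * K)ᴴ * (Uᴴ * L) = Kᴴ * L := by
    rw [conjTranspose_mul, conjTranspose_conjTranspose, Matrix.mul_assoc, ← Matrix.mul_assoc U,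
      hU, Matrix.one_mul]
  have hconj (K : Fin 2 → Matrix (Fin 2 × Fin 2) (Fin 2) ℂ) :
      ∑ k, (K k)ᴴ * (U * G * Uᴴ) * K k = ∑ k, (Uᴴ * K k)ᴴ * G * (Uᴴ * K k) := by
    simp only [conjTranspose_mul, conjTranspose_conjTranspose, Matrix.mul_assoc]
  refine ⟨fun hs => ?_, fun hp => ?_⟩
  · have h := fEnt_le_entropy_of_eq_sum_conjTranspose_mul_mul hG.isHermitian h21 h32 h3.le
      hsum heig hs (by rw [trace_redS, htrace])
      (K := fun i => Uᴴ * (sliceSnd i : Matrix (Fin 2 × Fin 2) (Fin 2) ℂ))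
      (fun i j => by rw [hiso, conjTranspose_sliceSnd_mul_sliceSnd]) (by rw [redS_eq_sum, hconj])
    exact ⟨hpos.trans_le h, h⟩
  · have h := fEnt_le_entropy_of_eq_sum_conjTranspose_mul_mul hG.isHermitian h21 h32 h3.le
      hsum heig hp (by rw [trace_redP, htrace])
      (K := fun k => Uᴴ * (sliceFst k : Matrix (Fin 2 × Fin 2) (Fin 2) ℂ))
      (fun k l => by rw [hiso, conjTranspose_sliceFst_mul_sliceFst]) (by rw [redP_eq_sum, hconj])
    exact ⟨hpos.trans_le h, h⟩

/-- For a trace-1 Hermitian positive semidefinite 4×4 coherence matrix of rank exactly 3 with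
nonzero eigenvalues `l1 ≥ l2 ≥ l3 > 0`, under every global unitary the entropies of both
reduced coherence matrices are strictly positive, being bounded below by `f(l1 + l2) > 0`:
some entropy is always locked in each degree of freedom. -/
theorem rank_three_locked_entropy
    (G : Matrix (Fin 2 × Fin 2) (Fin 2 × Fin 2) ℂ) (hG : G.PosSemidef)
    (htr : G.trace = 1) (hrank : G.rank = 3)
    (l1 l2 l3 : ℝ) (h21 : l2 ≤ l1) (h32 : l3 ≤ l2) (h3 : 0 < l3)
    (heig : Finset.univ.val.map hG.isHermitian.eigenvalues =
      ({l1, l2, l3, 0} : Multiset ℝ)) :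
    0 < fEnt (l1 + l2) ∧
      ∀ U : Matrix (Fin 2 × Fin 2) (Fin 2 × Fin 2) ℂ, U * Uᴴ = 1 →
        (∀ hs : (redS (U * G * Uᴴ)).IsHermitian,
          0 < entropy hs ∧ fEnt (l1 + l2) ≤ entropy hs) ∧
        (∀ hp : (redP (U * G * Uᴴ)).IsHermitian,
          0 < entropy hp ∧ fEnt (l1 + l2) ≤ entropy hp) :=
  rank_three_locked_entropy_general G hG htr l1 l2 l3 h21 h32 h3 heig
end
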